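/- Fix n ≥ 1 and set a_{n+1} = 0, a_{n+2} = 1. Let D ⊆ (ℂ∖{0,1})ⁿ be an open set contained in {a : aᵢ ≠ aⱼ for i ≠ j}, and let B₁,…,B_{n+2} : D → M₂(ℂ) be holomorphic 2×2-matrix-valued functions of a = (a₁,…,aₙ) satisfying the Schlesinger equations with two fixed points: ∂Bᵢ/∂aⱼ = [Bᵢ,Bⱼ]/(aᵢ−aⱼ) for all i ∈ {1,…,n+2}, j ∈ {1,…,n} with i ≠ j, and ∂Bⱼ/∂aⱼ = −∑_{l=1,…,n+2, l≠j} [Bⱼ,B_l]/(aⱼ−a_l) for j ∈ {1,…,n}. Suppose ∑_{i=1}^{n+2} Bᵢ(a) = diag(θ,−θ) for all a ∈ D with θ ∈ ℂ constant and 2θ+1 ≠ 0. Define b(a) = ∑_{i=1}^{n} aᵢ·(Bᵢ(a))₁₂ + (B_{n+2}(a))₁₂. If at some point a⁰ ∈ D one has b(a⁰) = 0 and ∂b/∂aⱼ(a⁰) = 0 for all j = 1,…,n, then (Bᵢ(a⁰))₁₂ = 0 for ALL i = 1,…,n+2. -/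

import Mathlib

/-!
Differentiate `b = ∑ᵢ aᵢ (Bᵢ)₁₂` along `aⱼ` and insert the Schlesinger equations: for `i ≠ j` the
contributions `aᵢ/(aᵢ - aⱼ)` and `aⱼ/(aⱼ - aᵢ)` of `[Bᵢ, Bⱼ]` add up to `1`, so
`∑ᵢ aᵢ ∂ⱼBᵢ = [∑ᵢ Bᵢ, Bⱼ] = [diag(θ, -θ), Bⱼ]`, whose upper-right entry is `2θ (Bⱼ)₁₂`. Hence
`∂ⱼb = (2θ + 1)(Bⱼ)₁₂`, and the moving entries vanish at `a⁰`. Then `b(a⁰) = (B_{n+2})₁₂` and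
`∑ᵢ (Bᵢ)₁₂ = 0` kill the entries at the two fixed points.
-/

attribute [local instance] Matrix.normedAddCommGroup Matrix.normedSpace

/-- The `n+2` singular points: the moving points `a₁, …, aₙ` together with the
fixed points `a_{n+1} = 0` and `a_{n+2} = 1`. -/
noncomputable def extPts (n : ℕ) (a : Fin n → ℂ) : Fin (n + 2) → ℂ :=
  fun i => if h : (i : ℕ) < n then a ⟨i, h⟩ else if (i : ℕ) = n then 0 else 1

open Finset

theorem Matrix.diagonal_mul_sub_mul_diagonal_apply {m R : Type*} [Fintype m] [DecidableEq m]
    [CommRing R] (d : m → R) (M : Matrix m m R) (i j : m) :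
    (diagonal d * M - M * diagonal d) i j = (d i - d j) * M i j := by
  simp only [sub_apply, diagonal_mul, mul_diagonal]
  ring

theorem sum_smul_eq_mul_sub_mul_of_schlesinger {K A ι : Type*} [Field K] [Ring A] [Algebra K A]
    [Fintype ι] [DecidableEq ι] {p : ι → K} {M dM : ι → A} {j : ι}
    (hp : ∀ i ≠ j, p i ≠ p j)
    (hoff : ∀ i ≠ j, dM i = (p i - p j)⁻¹ • (M i * M j - M j * M i))
    (hdiag : dM j = -∑ l ∈ univ.erase j, (p j - p l)⁻¹ • (M j * M l - M l * M j)) :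
    ∑ i, p i • dM i = (∑ i, M i) * M j - M j * ∑ i, M i := by
  set C : ι → A := fun i => M i * M j - M j * M i
  have hcoeff : ∀ i ∈ univ.erase j, p j * (p j - p i)⁻¹ + p i * (p i - p j)⁻¹ = 1 := by
    intro i hi
    have hij : p i - p j ≠ 0 := sub_ne_zero.mpr (hp i (ne_of_mem_erase hi))
    have hji : p j - p i ≠ 0 := sub_ne_zero.mpr (hp i (ne_of_mem_erase hi)).symm
    field_simp
    ring
  calc ∑ i, p i • dM i = p j • dM j + ∑ i ∈ univ.erase j, p i • dM i :=
        (add_sum_erase _ _ (mem_univ j)).symm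
    _ = ∑ i ∈ univ.erase j, (p j * (p j - p i)⁻¹ + p i * (p i - p j)⁻¹) • C i := by
        rw [hdiag, smul_neg, smul_sum, ← sum_neg_distrib, ← sum_add_distrib]
        refine sum_congr rfl fun i hi => ?_
        rw [hoff i (ne_of_mem_erase hi), add_smul, mul_smul, mul_smul, ← neg_sub (M i * M j),
          smul_neg, smul_neg, neg_neg]
    _ = ∑ i, C i := by
        rw [sum_congr rfl fun i hi => by rw [hcoeff i hi, one_smul]]
        exact sum_erase _ (sub_self _)
    _ = (∑ i, M i) * M j - M j * ∑ i, M i := by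
        rw [sum_mul, mul_sum, ← sum_sub_distrib]

theorem extPts_castAdd (n : ℕ) (a : Fin n → ℂ) (k : Fin n) :
    extPts n a (Fin.castAdd 2 k) = a k := by
  simp [extPts]

theorem extPts_natAdd (n : ℕ) (a : Fin n → ℂ) (m : Fin 2) :
    extPts n a (Fin.natAdd n m) = ![0, 1] m := by
  fin_cases m <;> simp [extPts]

theorem differentiable_extPts_apply (n : ℕ) (i : Fin (n + 2)) :
    Differentiable ℂ (fun a => extPts n a i) := by
  induction i using Fin.addCases with
  | left k => simpa only [extPts_castAdd] using differentiable_apply k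
  | right m => simpa only [extPts_natAdd] using differentiable_const _

theorem fderiv_extPts_apply_single (n : ℕ) (a : Fin n → ℂ) (i : Fin (n + 2)) (j : Fin n) :
    fderiv ℂ (fun a => extPts n a i) a (Pi.single j 1) =
      (Pi.single (Fin.castAdd 2 j) 1 : Fin (n + 2) → ℂ) i := by
  induction i using Fin.addCases with
  | left k =>
    simp only [extPts_castAdd, (hasFDerivAt_apply k a).fderiv, ContinuousLinearMap.proj_apply,
      Pi.single_apply, Fin.castAdd_inj]
  | right m =>
    have hne : Fin.natAdd n m ≠ Fin.castAdd 2 j := fun h => by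
      have := congrArg Fin.val h
      simp at this
      omega
    simp [extPts_natAdd, hne]

section Schlesinger

variable {n : ℕ} {B : Fin (n + 2) → (Fin n → ℂ) → Matrix (Fin 2) (Fin 2) ℂ} {a : Fin n → ℂ}

theorem fderiv_sum_extPts_smul_single (hB : ∀ i, DifferentiableAt ℂ (B i) a) (j : Fin n) :
    fderiv ℂ (fun a => ∑ i, extPts n a i • B i a) a (Pi.single j 1) =
      ∑ i, extPts n a i • fderiv ℂ (B i) a (Pi.single j 1) + B (Fin.castAdd 2 j) a := by
  have hF : HasFDerivAt (fun a => ∑ i, extPts n a i • B i a)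
      (∑ i, (extPts n a i • fderiv ℂ (B i) a +
        (fderiv ℂ (fun a => extPts n a i) a).smulRight (B i a))) a :=
    HasFDerivAt.fun_sum fun i _ =>
      (differentiable_extPts_apply n i a).hasFDerivAt.smul (hB i).hasFDerivAt
  simp only [hF.fderiv, _root_.sum_apply, add_apply, smul_apply,
    ContinuousLinearMap.smulRight_apply, fderiv_extPts_apply_single, sum_add_distrib,
    Pi.single_apply, ite_smul, one_smul, zero_smul, sum_ite_eq', mem_univ, if_true]

theorem fderiv_sum_extPts_smul_single_of_schlesinger (hB : ∀ i, DifferentiableAt ℂ (B i) a)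
    (hdist : ∀ i j, i ≠ j → extPts n a i ≠ extPts n a j) {j : Fin n}
    (hoff : ∀ i, i ≠ Fin.castAdd 2 j → fderiv ℂ (B i) a (Pi.single j 1) =
      (extPts n a i - a j)⁻¹ • (B i a * B (Fin.castAdd 2 j) a - B (Fin.castAdd 2 j) a * B i a))
    (hdiag : fderiv ℂ (B (Fin.castAdd 2 j)) a (Pi.single j 1) =
      -∑ l ∈ univ.erase (Fin.castAdd 2 j), (a j - extPts n a l)⁻¹ •
        (B (Fin.castAdd 2 j) a * B l a - B l a * B (Fin.castAdd 2 j) a)) :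
    fderiv ℂ (fun a => ∑ i, extPts n a i • B i a) a (Pi.single j 1) =
      (∑ i, B i a) * B (Fin.castAdd 2 j) a - B (Fin.castAdd 2 j) a * (∑ i, B i a) +
        B (Fin.castAdd 2 j) a := by
  rw [fderiv_sum_extPts_smul_single hB, sum_smul_eq_mul_sub_mul_of_schlesinger
    (p := extPts n a) (M := fun i => B i a) (j := Fin.castAdd 2 j) (fun i hi => hdist i _ hi)
    (by simpa only [extPts_castAdd] using hoff) (by simpa only [extPts_castAdd] using hdiag)]

theorem fderiv_apply_single_eq_of_schlesinger {b : (Fin n → ℂ) → ℂ} {θ : ℂ}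
    (hb : ∀ a, b a = ∑ i, extPts n a i * B i a 0 1) (hB : ∀ i, DifferentiableAt ℂ (B i) a)
    (hdist : ∀ i j, i ≠ j → extPts n a i ≠ extPts n a j) {j : Fin n}
    (hoff : ∀ i, i ≠ Fin.castAdd 2 j → fderiv ℂ (B i) a (Pi.single j 1) =
      (extPts n a i - a j)⁻¹ • (B i a * B (Fin.castAdd 2 j) a - B (Fin.castAdd 2 j) a * B i a))
    (hdiag : fderiv ℂ (B (Fin.castAdd 2 j)) a (Pi.single j 1) =
      -∑ l ∈ univ.erase (Fin.castAdd 2 j), (a j - extPts n a l)⁻¹ •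
        (B (Fin.castAdd 2 j) a * B l a - B l a * B (Fin.castAdd 2 j) a))
    (hsum : ∑ i, B i a = Matrix.diagonal ![θ, -θ]) :
    fderiv ℂ b a (Pi.single j 1) = (2 * θ + 1) * B (Fin.castAdd 2 j) a 0 1 := by
  let E : Matrix (Fin 2) (Fin 2) ℂ →L[ℂ] ℂ :=
    LinearMap.toContinuousLinearMap (Matrix.entryLinearMap ℂ ℂ 0 1)
  set F := fun a => ∑ i, extPts n a i • B i a
  have hbF : b = E ∘ F := funext fun a => by simp [hb, E, F]
  have hF : DifferentiableAt ℂ F a :=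
    DifferentiableAt.fun_sum fun i _ => (differentiable_extPts_apply n i a).smul (hB i)
  rw [hbF, (E.hasFDerivAt.comp a hF.hasFDerivAt).fderiv]
  -- `ContinuousLinearMap.comp_apply` does not fire: the matrix topologies differ syntactically.
  change E (fderiv ℂ F a (Pi.single j 1)) = _
  rw [fderiv_sum_extPts_smul_single_of_schlesinger hB hdist hoff hdiag, hsum]
  change (Matrix.diagonal ![θ, -θ] * B (Fin.castAdd 2 j) a - B (Fin.castAdd 2 j) a *
    Matrix.diagonal ![θ, -θ] + B (Fin.castAdd 2 j) a) 0 1 = _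
  rw [Matrix.add_apply, Matrix.diagonal_mul_sub_mul_diagonal_apply]
  simp only [Matrix.cons_val_zero, Matrix.cons_val_one]
  ring

end Schlesinger

theorem schlesinger_vanishing_differential_gives_reducibility_general
    (n : ℕ) (D : Set (Fin n → ℂ)) (hD : IsOpen D)
    (hDdist : ∀ a ∈ D, ∀ i j : Fin (n + 2), i ≠ j → extPts n a i ≠ extPts n a j)
    (B : Fin (n + 2) → (Fin n → ℂ) → Matrix (Fin 2) (Fin 2) ℂ)
    (hBdiff : ∀ i, DifferentiableOn ℂ (B i) D)
    (hSch_off : ∀ (i : Fin (n + 2)) (j : Fin n), i ≠ Fin.castAdd 2 j → ∀ a ∈ D,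
      fderiv ℂ (B i) a (Pi.single j 1) =
        (extPts n a i - a j)⁻¹ •
          (B i a * B (Fin.castAdd 2 j) a - B (Fin.castAdd 2 j) a * B i a))
    (hSch_diag : ∀ j : Fin n, ∀ a ∈ D,
      fderiv ℂ (B (Fin.castAdd 2 j)) a (Pi.single j 1) =
        -∑ l ∈ Finset.univ.erase (Fin.castAdd 2 j),
          (a j - extPts n a l)⁻¹ •
            (B (Fin.castAdd 2 j) a * B l a - B l a * B (Fin.castAdd 2 j) a))
    (θ : ℂ) (hθ : 2 * θ + 1 ≠ 0)
    (hsum : ∀ a ∈ D, ∑ i, B i a = Matrix.diagonal ![θ, -θ])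
    (b : (Fin n → ℂ) → ℂ)
    (hb : ∀ a, b a = ∑ i, extPts n a i * B i a 0 1)
    (a0 : Fin n → ℂ) (ha0 : a0 ∈ D)
    (hb0 : b a0 = 0)
    (hdb0 : ∀ j : Fin n, fderiv ℂ b a0 (Pi.single j 1) = 0) :
    ∀ i : Fin (n + 2), B i a0 0 1 = 0 := by
  have hB : ∀ i, DifferentiableAt ℂ (B i) a0 := fun i =>
    (hBdiff i).differentiableAt (hD.mem_nhds ha0)
  have hmoving : ∀ j : Fin n, B (Fin.castAdd 2 j) a0 0 1 = 0 := fun j => by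
    have hdb := hdb0 j
    rw [fderiv_apply_single_eq_of_schlesinger hb hB (hDdist a0 ha0)
      (fun i hi => hSch_off i j hi a0 ha0) (hSch_diag j a0 ha0) (hsum a0 ha0)] at hdb
    exact (mul_eq_zero.mp hdb).resolve_left hθ
  have htrace : ∑ i, B i a0 0 1 = 0 := by
    rw [← Matrix.sum_apply, hsum a0 ha0]
    rfl
  have hone : B (Fin.natAdd n 1) a0 0 1 = 0 := by
    simpa [hb, Fin.sum_univ_add, hmoving, extPts_natAdd] using hb0
  have hzero : B (Fin.natAdd n 0) a0 0 1 = 0 := by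
    simpa [Fin.sum_univ_add, hmoving, hone] using htrace
  intro i
  induction i using Fin.addCases with
  | left j => exact hmoving j
  | right m => fin_cases m; exacts [hzero, hone]

/-- If `2θ+1 ≠ 0` and at a point `a⁰` both `b(a⁰) = 0` and `db(a⁰) = 0`, then all the
upper-right entries `(Bᵢ(a⁰))₁₂` vanish (so the monodromy would be reducible). -/
theorem schlesinger_vanishing_differential_gives_reducibility
    (n : ℕ) (hn : 1 ≤ n) (D : Set (Fin n → ℂ)) (hD : IsOpen D)
    (hD01 : ∀ a ∈ D, ∀ i : Fin n, a i ≠ 0 ∧ a i ≠ 1)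
    (hDdist : ∀ a ∈ D, ∀ i j : Fin (n + 2), i ≠ j → extPts n a i ≠ extPts n a j)
    (B : Fin (n + 2) → (Fin n → ℂ) → Matrix (Fin 2) (Fin 2) ℂ)
    (hBdiff : ∀ i, DifferentiableOn ℂ (B i) D)
    (hSch_off : ∀ (i : Fin (n + 2)) (j : Fin n), i ≠ Fin.castAdd 2 j → ∀ a ∈ D,
      fderiv ℂ (B i) a (Pi.single j 1) =
        (extPts n a i - a j)⁻¹ •
          (B i a * B (Fin.castAdd 2 j) a - B (Fin.castAdd 2 j) a * B i a))
    (hSch_diag : ∀ j : Fin n, ∀ a ∈ D,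
      fderiv ℂ (B (Fin.castAdd 2 j)) a (Pi.single j 1) =
        -∑ l ∈ Finset.univ.erase (Fin.castAdd 2 j),
          (a j - extPts n a l)⁻¹ •
            (B (Fin.castAdd 2 j) a * B l a - B l a * B (Fin.castAdd 2 j) a))
    (θ : ℂ) (hθ : 2 * θ + 1 ≠ 0)
    (hsum : ∀ a ∈ D, ∑ i, B i a = Matrix.diagonal ![θ, -θ])
    (b : (Fin n → ℂ) → ℂ)
    (hb : ∀ a, b a = ∑ i, extPts n a i * B i a 0 1)
    (a0 : Fin n → ℂ) (ha0 : a0 ∈ D)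
    (hb0 : b a0 = 0)
    (hdb0 : ∀ j : Fin n, fderiv ℂ b a0 (Pi.single j 1) = 0) :
    ∀ i : Fin (n + 2), B i a0 0 1 = 0 :=
  schlesinger_vanishing_differential_gives_reducibility_general n D hD hDdist B hBdiff hSch_off
    hSch_diag θ hθ hsum b hb a0 ha0 hb0 hdb0
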